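/- Let α, β, ζ₁, ζ₂, S₁, S₂ ∈ ℝ and let a, b ∈ ℝ² be linearly independent. Let P be the 2×2 matrix whose first row is aᵀ and second row is bᵀ, and define d := P⁻¹(S₁ − ζ₁, S₂ − ζ₂) and c := P⁻¹(α, β). If μ ∈ ℝ satisfies ‖c‖²μ² − (2⟨d,c⟩ + 1)μ + ‖d‖² = 0, then the vector x := d − μc satisfies ‖x‖² = μ (so in particular μ ≥ 0), and x solves the system α‖x‖² + ⟨a,x⟩ + ζ₁ = S₁ and β‖x‖² + ⟨b,x⟩ + ζ₂ = S₂. -/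

import Mathlib

open scoped RealInnerProductSpace

/-- Interpret a plain vector `Fin 2 → ℝ` as an element of Euclidean space `ℝ²`. -/
noncomputable def toE (v : Fin 2 → ℝ) : EuclideanSpace ℝ (Fin 2) := WithLp.toLp 2 v

/-- The 2×2 matrix whose first row is `aᵀ` and second row is `bᵀ`. -/
noncomputable def Pmat (a b : EuclideanSpace ℝ (Fin 2)) : Matrix (Fin 2) (Fin 2) ℝ :=
  !![a 0, a 1; b 0, b 1]

/-- `d := P⁻¹ (S₁ − ζ₁, S₂ − ζ₂)`. -/
noncomputable def dvec (a b : EuclideanSpace ℝ (Fin 2)) (ζ₁ ζ₂ S₁ S₂ : ℝ) :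
    EuclideanSpace ℝ (Fin 2) :=
  toE ((Pmat a b)⁻¹.mulVec ![S₁ - ζ₁, S₂ - ζ₂])

/-- `c := P⁻¹ (α, β)`. -/
noncomputable def cvec (a b : EuclideanSpace ℝ (Fin 2)) (α β : ℝ) :
    EuclideanSpace ℝ (Fin 2) :=
  toE ((Pmat a b)⁻¹.mulVec ![α, β])

/-!
Since `P` has rows `a` and `b`, the vector `P⁻¹ v` has inner products `v 0` with `a` and `v 1`
with `b`. Hence `⟪a, d - μ • c⟫ = S₁ - ζ₁ - μ α`, so both output equations reduce to
`‖x‖² = μ`; and expanding `‖d - μ • c‖²` shows that this is exactly the quadratic in `μ`.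
-/

open Matrix

theorem Pmat_isUnit {a b : EuclideanSpace ℝ (Fin 2)} (hab : LinearIndependent ℝ ![a, b]) :
    IsUnit (Pmat a b) := by
  rw [← linearIndependent_rows_iff_isUnit]
  have hrows : (Pmat a b).row = WithLp.linearEquiv 2 ℝ (Fin 2 → ℝ) ∘ ![a, b] := by
    ext i j
    fin_cases i <;> fin_cases j <;> rfl
  rw [hrows]
  exact hab.map' _ (LinearEquiv.ker _)

theorem Pmat_mulVec (a b : EuclideanSpace ℝ (Fin 2)) (w : Fin 2 → ℝ) :
    Pmat a b *ᵥ w = ![⟪a, toE w⟫, ⟪b, toE w⟫] := by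
  ext i
  fin_cases i <;>
    simp [Pmat, toE, PiLp.inner_apply, Fin.sum_univ_two, mulVec, dotProduct, mul_comm]

theorem inner_toE_inv_mulVec {a b : EuclideanSpace ℝ (Fin 2)} (hab : LinearIndependent ℝ ![a, b])
    (v : Fin 2 → ℝ) :
    ⟪a, toE ((Pmat a b)⁻¹ *ᵥ v)⟫ = v 0 ∧ ⟪b, toE ((Pmat a b)⁻¹ *ᵥ v)⟫ = v 1 := by
  have hv : Pmat a b *ᵥ ((Pmat a b)⁻¹ *ᵥ v) = v := by
    rw [mulVec_mulVec, mul_nonsing_inv _ ((isUnit_iff_isUnit_det _).mp (Pmat_isUnit hab)),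
      one_mulVec]
  rw [Pmat_mulVec] at hv
  exact ⟨congrFun hv 0, congrFun hv 1⟩

theorem norm_sub_smul_sq_eq_of_quadratic {E : Type*} [NormedAddCommGroup E]
    [InnerProductSpace ℝ E] {c d : E} {μ : ℝ}
    (hμ : ‖c‖ ^ 2 * μ ^ 2 - (2 * ⟪d, c⟫ + 1) * μ + ‖d‖ ^ 2 = 0) :
    ‖d - μ • c‖ ^ 2 = μ := by
  rw [norm_sub_sq_real, real_inner_smul_right, norm_smul, Real.norm_eq_abs, mul_pow, sq_abs]
  linear_combination hμ

/-- every real root `μ` of the scalar quadratic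
`‖c‖²μ² − (2⟨d,c⟩ + 1)μ + ‖d‖² = 0` produces a genuine solution `x = d − μc` of the
pair of quadratic output equations, with `‖x‖² = μ`. -/
theorem stmt11 (α β ζ₁ ζ₂ S₁ S₂ : ℝ) (a b : EuclideanSpace ℝ (Fin 2))
    (hab : LinearIndependent ℝ ![a, b])
    (μ : ℝ)
    (hμ : ‖cvec a b α β‖ ^ 2 * μ ^ 2 -
      (2 * ⟪dvec a b ζ₁ ζ₂ S₁ S₂, cvec a b α β⟫ + 1) * μ +
      ‖dvec a b ζ₁ ζ₂ S₁ S₂‖ ^ 2 = 0) :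
    ‖dvec a b ζ₁ ζ₂ S₁ S₂ - μ • cvec a b α β‖ ^ 2 = μ ∧
    α * ‖dvec a b ζ₁ ζ₂ S₁ S₂ - μ • cvec a b α β‖ ^ 2 +
      ⟪a, dvec a b ζ₁ ζ₂ S₁ S₂ - μ • cvec a b α β⟫ + ζ₁ = S₁ ∧
    β * ‖dvec a b ζ₁ ζ₂ S₁ S₂ - μ • cvec a b α β‖ ^ 2 +
      ⟪b, dvec a b ζ₁ ζ₂ S₁ S₂ - μ • cvec a b α β⟫ + ζ₂ = S₂ := by
  obtain ⟨had, hbd⟩ :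
      ⟪a, dvec a b ζ₁ ζ₂ S₁ S₂⟫ = S₁ - ζ₁ ∧ ⟪b, dvec a b ζ₁ ζ₂ S₁ S₂⟫ = S₂ - ζ₂ :=
    inner_toE_inv_mulVec hab _
  obtain ⟨hac, hbc⟩ : ⟪a, cvec a b α β⟫ = α ∧ ⟪b, cvec a b α β⟫ = β :=
    inner_toE_inv_mulVec hab _
  have hnorm := norm_sub_smul_sq_eq_of_quadratic hμ
  refine ⟨hnorm, ?_, ?_⟩ <;> rw [hnorm, inner_sub_right, real_inner_smul_right]
  · rw [had, hac]; ring
  · rw [hbd, hbc]; ring
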